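/- arXiv:1410.4810 — 2 statements merged into one kernel-verified Lean document; each statement's English description precedes it below -/
import Mathlib

section
/- Let 0 < p ≤ ∞ and 0 < α < ∞, and let γ be a real number. The function f(z) = (1-z)^{-γ} belongs to H(p,∞,α) if and only if γ ≤ α + 1/p. -/
open MeasureTheory Real Set Filter ENNReal

noncomputable section

/-- The `p`-th integral mean of `f` on the circle of radius `r` (with `p = ∞` allowed,
giving the sup of `|f|` on the circle). -/
def intMean (p : ℝ≥0∞) (f : ℂ → ℂ) (r : ℝ) : ℝ :=
  if p = ⊤ then
    sSup ((fun θ : ℝ => ‖f (r * Complex.exp (θ * Complex.I))‖) '' Set.Icc 0 (2 * π))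
  else
    ((1 / (2 * π)) * ∫ θ in (0:ℝ)..(2 * π),
        ‖f (r * Complex.exp (θ * Complex.I))‖ ^ p.toReal) ^ (1 / p.toReal)

/-- The mixed norm `‖f‖_{p,q,α}` (with the sup-version when `q = ∞`). -/
def mixedNorm (p q : ℝ≥0∞) (α : ℝ) (f : ℂ → ℂ) : ℝ :=
  if q = ⊤ then
    sSup ((fun r : ℝ => (1 - r) ^ α * intMean p f r) '' Set.Ico 0 1)
  else
    (α * q.toReal * ∫ r in (0:ℝ)..1,
        (1 - r) ^ (α * q.toReal - 1) * intMean p f r ^ q.toReal) ^ (1 / q.toReal)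

/-- Membership in the mixed norm space `H(p,q,α)`: `f` is analytic on the unit disk and
its mixed norm is finite (for `q < ∞` this means the defining integral converges; for
`q = ∞` that the relevant family is bounded). -/
def MemH (p q : ℝ≥0∞) (α : ℝ) (f : ℂ → ℂ) : Prop :=
  AnalyticOn ℂ f (Metric.ball 0 1) ∧
  if q = ⊤ then
    BddAbove ((fun r : ℝ => (1 - r) ^ α * intMean p f r) '' Set.Ico 0 1)
  else
    IntervalIntegrable
      (fun r : ℝ => (1 - r) ^ (α * q.toReal - 1) * intMean p f r ^ q.toReal)
      MeasureTheory.volume 0 1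

/-- The Euler Beta function `B(a,b) = ∫_0^1 (1-x)^{a-1} x^{b-1} dx`. -/
def betaFn (a b : ℝ) : ℝ := ∫ x in (0:ℝ)..1, (1 - x) ^ (a - 1) * x ^ (b - 1)

end

/-!
On the circle of radius `r`, `‖(1 - z) ^ (-γ)‖ = ‖1 - r e^{iθ}‖ ^ (-γ)`. The chord `‖1 - r e^{iθ}‖`
is at least `1 - r`, with equality at `θ = 0`, and for `0 ≤ θ ≤ π` it is comparable to `1 - r + θ`
within a factor `10`. Hence for `p = ∞` the circle maximum is at least `(1 - r) ^ (-γ)` and at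
most `max ((1 - r) ^ (-γ)) (2 ^ (-γ))`. For `p < ∞`, `M_p(r) ^ p` is comparable to
`∫₀^π (1 - r + θ) ^ (-γp) dθ`, which is of order `(1 - r) ^ (1 - γp)` for `γp > 1`,
`log (1 / (1 - r))` for `γp = 1` and `1` for `γp < 1`. After multiplying by the weight
`(1 - r) ^ (αp)` this stays bounded exactly when `γp ≤ αp + 1`; in the logarithmic case `γp = 1`
it is `α > 0` that absorbs the logarithm.
-/

open Topology intervalIntegral

lemma rpow_le_max_rpow_of_mem_Icc {a b x : ℝ} (ha : 0 < a) (hx : x ∈ Icc a b) (e : ℝ) :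
    x ^ e ≤ max (a ^ e) (b ^ e) := by
  rcases le_total 0 e with he | he
  · exact (rpow_le_rpow (ha.le.trans hx.1) hx.2 he).trans (le_max_right _ _)
  · exact (rpow_le_rpow_of_nonpos ha hx.1 he).trans (le_max_left _ _)

lemma nonneg_of_forall_mul_rpow_le {c k K : ℝ} (hc : 0 < c)
    (h : ∀ x ∈ Ioc (0 : ℝ) 1, c * x ^ k ≤ K) : 0 ≤ k := by
  by_contra! hk
  have hlim : Tendsto (fun x : ℝ => c * x ^ k) (𝓝[>] 0) atTop :=
    (tendsto_rpow_neg_nhdsGT_zero hk).const_mul_atTop hc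
  have hmem : ∀ᶠ x in 𝓝[>] (0 : ℝ), x ∈ Ioc 0 1 := Ioc_mem_nhdsGT one_pos
  obtain ⟨x, hx, hKx⟩ := (hmem.and (hlim.eventually_gt_atTop K)).exists
  exact (h x hx).not_gt hKx

lemma bddAbove_image_const_mul_rpow_iff {ι : Type*} {f : ι → ℝ} {s : Set ι} {c t : ℝ}
    (hc : 0 < c) (ht : 0 < t) (hf : ∀ x ∈ s, 0 ≤ f x) :
    BddAbove ((fun x => (c * f x) ^ t) '' s) ↔ BddAbove (f '' s) := by
  refine ⟨fun ⟨K, hK⟩ => ⟨K ^ t⁻¹ / c, ?_⟩, fun ⟨K, hK⟩ => ⟨(c * K) ^ t, ?_⟩⟩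
  · rintro _ ⟨x, hx, rfl⟩
    have hcf : 0 ≤ c * f x := mul_nonneg hc.le (hf x hx)
    rw [le_div_iff₀' hc, ← rpow_rpow_inv hcf ht.ne']
    exact rpow_le_rpow (rpow_nonneg hcf t) (hK (mem_image_of_mem _ hx)) (inv_nonneg.2 ht.le)
  · rintro _ ⟨x, hx, rfl⟩
    have hfK : f x ≤ K := hK (mem_image_of_mem _ hx)
    exact rpow_le_rpow (mul_nonneg hc.le (hf x hx)) (by gcongr) ht.le

lemma intervalIntegrable_add_rpow {a b : ℝ} (ha : 0 < a) (hb : 0 ≤ b) (e : ℝ) :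
    IntervalIntegrable (fun θ => (a + θ) ^ e) volume 0 b :=
  ContinuousOn.intervalIntegrable <| ContinuousOn.rpow_const (by fun_prop) fun θ hθ => by
    rw [uIcc_of_le hb] at hθ
    exact .inl (add_pos_of_pos_of_nonneg ha hθ.1).ne'

lemma integral_add_rpow_le_of_neg_one_lt {a e : ℝ} (ha : 0 < a) (ha1 : a ≤ 1) (he : -1 < e) :
    ∫ θ in (0)..π, (a + θ) ^ e ≤ (1 + π) ^ (e + 1) / (e + 1) := by
  have he1 : 0 < e + 1 := by linarith
  rw [integral_comp_add_left (fun x => x ^ e), integral_rpow (.inl he), add_zero]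
  gcongr
  calc (a + π) ^ (e + 1) - a ^ (e + 1) ≤ (a + π) ^ (e + 1) :=
        sub_le_self _ (rpow_nonneg ha.le _)
    _ ≤ (1 + π) ^ (e + 1) := by gcongr

lemma integral_add_rpow_le_of_lt_neg_one {a e : ℝ} (ha : 0 < a) (he : e < -1) :
    ∫ θ in (0)..π, (a + θ) ^ e ≤ a ^ (e + 1) / (-1 - e) := by
  rw [integral_comp_add_left (fun x => x ^ e),
    integral_rpow (.inr ⟨he.ne, fun h => by
      rw [uIcc_of_le (by linarith [pi_pos])] at h; linarith [h.1]⟩),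
    add_zero, ← neg_div_neg_eq, neg_sub, show -(e + 1) = -1 - e by ring]
  gcongr
  exact sub_le_self _ (rpow_nonneg (by linarith [pi_pos]) _)

/-- When `e + m > -1`, the weight `a ^ m` is absorbed pointwise via `a ≤ a + θ`; in the boundary
case `e = -1 - m` the integral is of exact order `a ^ (e + 1) = a ^ (-m)`. -/
lemma exists_forall_rpow_mul_integral_add_rpow_le {m e : ℝ} (hm : 0 < m) (he : -1 - m ≤ e) :
    ∃ C, ∀ a ∈ Ioc (0 : ℝ) 1, a ^ m * ∫ θ in (0)..π, (a + θ) ^ e ≤ C := by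
  rcases he.lt_or_eq with he | he
  · refine ⟨(1 + π) ^ (e + m + 1) / (e + m + 1), fun a ⟨ha, ha1⟩ => ?_⟩
    have hpoint : ∀ θ ∈ Icc 0 π, a ^ m * (a + θ) ^ e ≤ (a + θ) ^ (e + m) := fun θ hθ => by
      have hθa : a ≤ a + θ := le_add_of_nonneg_right hθ.1
      rw [rpow_add (ha.trans_le hθa), mul_comm ((a + θ) ^ e)]
      exact mul_le_mul_of_nonneg_right (rpow_le_rpow ha.le hθa hm.le)
        (rpow_nonneg (ha.le.trans hθa) e)
    calc a ^ m * ∫ θ in (0)..π, (a + θ) ^ e = ∫ θ in (0)..π, a ^ m * (a + θ) ^ e :=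
          (intervalIntegral.integral_const_mul _ _).symm
      _ ≤ ∫ θ in (0)..π, (a + θ) ^ (e + m) :=
          integral_mono_on pi_pos.le ((intervalIntegrable_add_rpow ha pi_pos.le e).const_mul _)
            (intervalIntegrable_add_rpow ha pi_pos.le _) hpoint
      _ ≤ (1 + π) ^ (e + m + 1) / (e + m + 1) :=
          integral_add_rpow_le_of_neg_one_lt ha ha1 (by linarith)
  · refine ⟨1 / m, fun a ⟨ha, _⟩ => ?_⟩
    calc a ^ m * ∫ θ in (0)..π, (a + θ) ^ e ≤ a ^ m * (a ^ (e + 1) / (-1 - e)) := by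
          gcongr
          exact integral_add_rpow_le_of_lt_neg_one ha (by linarith)
      _ = 1 / m := by
          rw [← he, show -1 - m + 1 = -m by ring, show -1 - (-1 - m) = m by ring,
            rpow_neg ha.le]
          field_simp

lemma analyticOn_one_sub_cpow (w : ℂ) :
    AnalyticOn ℂ (fun z : ℂ => (1 - z) ^ w) (Metric.ball 0 1) := by
  refine DifferentiableOn.analyticOn (fun z hz => ?_) Metric.isOpen_ball
  refine (DifferentiableAt.cpow (by fun_prop) (differentiableAt_const _) ?_).differentiableWithinAt
  have hz : ‖z‖ < 1 := mem_ball_zero_iff.1 hz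
  exact .inl (by simpa using (Complex.re_le_norm z).trans_lt hz)

noncomputable def distToOne (r θ : ℝ) : ℝ := ‖1 - (r : ℂ) * Complex.exp (θ * Complex.I)‖

lemma distToOne_nonneg (r θ : ℝ) : 0 ≤ distToOne r θ := norm_nonneg _

lemma distToOne_sq (r θ : ℝ) : distToOne r θ ^ 2 = (1 - r) ^ 2 + 2 * r * (1 - cos θ) := by
  rw [distToOne, Complex.sq_norm, Complex.normSq_apply]
  simp only [Complex.sub_re, Complex.sub_im, Complex.one_re, Complex.one_im, Complex.mul_re,
    Complex.mul_im, Complex.ofReal_re, Complex.ofReal_im, Complex.exp_ofReal_mul_I_re,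
    Complex.exp_ofReal_mul_I_im]
  linear_combination r ^ 2 * sin_sq_add_cos_sq θ

lemma distToOne_zero {r : ℝ} (hr : r ≤ 1) : distToOne r 0 = 1 - r := by
  rw [distToOne, Complex.ofReal_zero, zero_mul, Complex.exp_zero, mul_one, ← Complex.ofReal_one,
    ← Complex.ofReal_sub, Complex.norm_real, norm_of_nonneg (sub_nonneg.2 hr)]

lemma distToOne_two_pi_sub (r θ : ℝ) : distToOne r (2 * π - θ) = distToOne r θ := by
  refine (pow_left_inj₀ (distToOne_nonneg _ _) (distToOne_nonneg _ _) two_ne_zero).1 ?_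
  rw [distToOne_sq, distToOne_sq, cos_two_pi_sub]

lemma one_sub_le_distToOne {r : ℝ} (hr : 0 ≤ r) (θ : ℝ) : 1 - r ≤ distToOne r θ := by
  simpa [distToOne, Complex.norm_exp_ofReal_mul_I, abs_of_nonneg hr]
    using norm_sub_norm_le (1 : ℂ) (r * Complex.exp (θ * Complex.I))

lemma distToOne_pos {r : ℝ} (hr : 0 ≤ r) (hr1 : r < 1) (θ : ℝ) : 0 < distToOne r θ :=
  (sub_pos.2 hr1).trans_le (one_sub_le_distToOne hr θ)

lemma distToOne_le_two {r : ℝ} (hr : 0 ≤ r) (hr1 : r ≤ 1) (θ : ℝ) : distToOne r θ ≤ 2 := by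
  refine (norm_sub_le _ _).trans ?_
  simp [Complex.norm_exp_ofReal_mul_I, abs_of_nonneg hr]
  linarith

lemma distToOne_le_one_sub_add {r θ : ℝ} (hr : 0 ≤ r) (hr1 : r ≤ 1) (hθ : 0 ≤ θ) :
    distToOne r θ ≤ 1 - r + θ := by
  have := distToOne_sq r θ
  nlinarith [distToOne_nonneg r θ, one_sub_sq_div_two_le_cos (x := θ)]

/-- For `r ≥ 1/2` this is `sin (θ/2) ≥ θ/π`; for `r < 1/2` the term `1 - r` already dominates. -/
lemma one_sub_add_le_ten_mul_distToOne {r θ : ℝ} (hr : 0 ≤ r) (hθ0 : 0 ≤ θ) (hθ : θ ≤ π) :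
    1 - r + θ ≤ 10 * distToOne r θ := by
  have hπ : π ≤ 4 := pi_le_four
  rcases le_or_gt (1 / 2 : ℝ) r with h | h
  · have hsin : θ / π ≤ sin (θ / 2) := by
      have := mul_le_sin (x := θ / 2) (by positivity) (by linarith)
      rwa [show 2 / π * (θ / 2) = θ / π by field_simp] at this
    have hcos : 1 - cos θ = 2 * sin (θ / 2) ^ 2 := by
      have := sin_sq_eq_half_sub (θ / 2)
      rw [mul_div_cancel₀ θ two_ne_zero] at this
      linarith
    have hθπ : θ ^ 2 / 16 ≤ (θ / π) ^ 2 := by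
      rw [div_pow]
      exact div_le_div_of_nonneg_left (sq_nonneg θ) (by positivity) (by nlinarith [pi_pos])
    have hsq := distToOne_sq r θ
    have : (1 - r + θ) ^ 2 ≤ (10 * distToOne r θ) ^ 2 := by
      nlinarith [sq_nonneg (1 - r - θ), div_nonneg hθ0 pi_pos.le]
    exact le_of_sq_le_sq this (by linarith [distToOne_nonneg r θ])
  · linarith [one_sub_le_distToOne hr θ]

lemma continuous_distToOne_rpow {r : ℝ} (hr : 0 ≤ r) (hr1 : r < 1) (e : ℝ) :
    Continuous fun θ => distToOne r θ ^ e :=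
  (continuous_norm.comp (by fun_prop)).rpow_const fun θ => .inl (distToOne_pos hr hr1 θ).ne'

lemma distToOne_rpow_le {r θ : ℝ} (hr : 0 ≤ r) (hr1 : r < 1) (hθ0 : 0 ≤ θ) (hθ : θ ≤ π)
    (e : ℝ) : distToOne r θ ^ e ≤ 10 ^ |e| * (1 - r + θ) ^ e := by
  have hpos : 0 < 1 - r + θ := by linarith
  rcases le_total 0 e with he | he
  · calc distToOne r θ ^ e ≤ (1 - r + θ) ^ e :=
          rpow_le_rpow (distToOne_nonneg r θ) (distToOne_le_one_sub_add hr hr1.le hθ0) he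
      _ ≤ 10 ^ |e| * (1 - r + θ) ^ e :=
          le_mul_of_one_le_left (by positivity) (one_le_rpow (by norm_num) (abs_nonneg e))
  · calc distToOne r θ ^ e ≤ ((1 - r + θ) / 10) ^ e :=
          rpow_le_rpow_of_nonpos (by positivity)
            (by linarith [one_sub_add_le_ten_mul_distToOne hr hθ0 hθ]) he
      _ = 10 ^ |e| * (1 - r + θ) ^ e := by
          rw [div_rpow hpos.le (by norm_num), abs_of_nonpos he, Real.rpow_neg (by norm_num)]
          ring

lemma integral_distToOne_rpow_nonneg (r e : ℝ) :
    0 ≤ ∫ θ in (0)..(2 * π), distToOne r θ ^ e :=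
  integral_nonneg (by positivity) fun θ _ => rpow_nonneg (distToOne_nonneg r θ) e

lemma integral_distToOne_rpow_eq_two_mul {r : ℝ} (hr : 0 ≤ r) (hr1 : r < 1) (e : ℝ) :
    ∫ θ in (0)..(2 * π), distToOne r θ ^ e = 2 * ∫ θ in (0)..π, distToOne r θ ^ e := by
  have hcont := continuous_distToOne_rpow hr hr1 e
  rw [← integral_add_adjacent_intervals (hcont.intervalIntegrable 0 π)
    (hcont.intervalIntegrable π (2 * π))]
  have hreflect : ∫ θ in π..(2 * π), distToOne r θ ^ e = ∫ θ in (0)..π, distToOne r θ ^ e := by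
    have := integral_comp_sub_left (a := 0) (b := π) (fun θ => distToOne r θ ^ e) (2 * π)
    simp only [distToOne_two_pi_sub, sub_zero, show 2 * π - π = π by ring] at this
    exact this.symm
  rw [hreflect, two_mul]

lemma integral_distToOne_rpow_le {r : ℝ} (hr : 0 ≤ r) (hr1 : r < 1) (e : ℝ) :
    ∫ θ in (0)..(2 * π), distToOne r θ ^ e
      ≤ 2 * 10 ^ |e| * ∫ θ in (0)..π, (1 - r + θ) ^ e := by
  rw [integral_distToOne_rpow_eq_two_mul hr hr1, mul_assoc,
    ← intervalIntegral.integral_const_mul (10 ^ |e|)]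
  gcongr 2 * ?_
  refine integral_mono_on pi_pos.le
    ((continuous_distToOne_rpow hr hr1 e).intervalIntegrable 0 π) ?_ ?_
  · exact (intervalIntegrable_add_rpow (sub_pos.2 hr1) pi_pos.le e).const_mul _
  · exact fun θ hθ => distToOne_rpow_le hr hr1 hθ.1 hθ.2 e

lemma exists_forall_one_sub_rpow_mul_integral_distToOne_rpow_le {m e : ℝ} (hm : 0 < m)
    (he : -1 - m ≤ e) :
    ∃ C, ∀ r ∈ Ico (0 : ℝ) 1, (1 - r) ^ m * ∫ θ in (0)..(2 * π), distToOne r θ ^ e ≤ C := by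
  obtain ⟨C, hC⟩ := exists_forall_rpow_mul_integral_add_rpow_le hm he
  refine ⟨2 * 10 ^ |e| * C, fun r ⟨hr, hr1⟩ => ?_⟩
  calc (1 - r) ^ m * ∫ θ in (0)..(2 * π), distToOne r θ ^ e
      ≤ (1 - r) ^ m * (2 * 10 ^ |e| * ∫ θ in (0)..π, (1 - r + θ) ^ e) := by
        gcongr
        exact integral_distToOne_rpow_le hr hr1 e
    _ = 2 * 10 ^ |e| * ((1 - r) ^ m * ∫ θ in (0)..π, (1 - r + θ) ^ e) := by ring
    _ ≤ 2 * 10 ^ |e| * C := by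
        gcongr
        exact hC (1 - r) ⟨by linarith, by linarith⟩

lemma two_rpow_mul_one_sub_rpow_le_integral_distToOne_rpow {r e : ℝ} (hr : 0 ≤ r) (hr1 : r < 1)
    (he : e ≤ 0) :
    2 ^ e * (1 - r) ^ (e + 1) ≤ ∫ θ in (0)..(2 * π), distToOne r θ ^ e := by
  have ha : 0 < 1 - r := by linarith
  have hcont := continuous_distToOne_rpow hr hr1 e
  calc 2 ^ e * (1 - r) ^ (e + 1) = ∫ _ in (0)..(1 - r), (2 * (1 - r)) ^ e := by
        rw [intervalIntegral.integral_const, smul_eq_mul, sub_zero, mul_rpow zero_le_two ha.le,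
          rpow_add_one ha.ne']
        ring
    _ ≤ ∫ θ in (0)..(1 - r), distToOne r θ ^ e :=
        integral_mono_on ha.le intervalIntegrable_const (hcont.intervalIntegrable _ _)
          fun θ hθ => rpow_le_rpow_of_nonpos (distToOne_pos hr hr1 θ)
            ((distToOne_le_one_sub_add hr hr1.le hθ.1).trans (by linarith [hθ.2])) he
    _ ≤ ∫ θ in (0)..(2 * π), distToOne r θ ^ e :=
        integral_mono_interval le_rfl ha.le (by linarith [pi_gt_three])
          (.of_forall fun θ => rpow_nonneg (distToOne_nonneg r θ) e) (hcont.intervalIntegrable _ _)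

lemma bddAbove_one_sub_rpow_mul_integral_distToOne_rpow_iff {m e : ℝ} (hm : 0 < m) :
    BddAbove ((fun r => (1 - r) ^ m * ∫ θ in (0)..(2 * π), distToOne r θ ^ e) '' Ico 0 1) ↔
      -1 - m ≤ e := by
  refine ⟨fun ⟨K, hK⟩ => ?_, fun he => ?_⟩
  · by_contra! he
    suffices 0 ≤ m + e + 1 by linarith
    refine nonneg_of_forall_mul_rpow_le (c := 2 ^ e) (K := K) (by positivity) fun x ⟨hx, hx1⟩ => ?_
    have hr : 1 - x ∈ Ico (0 : ℝ) 1 := ⟨by linarith, by linarith⟩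
    have hlower := two_rpow_mul_one_sub_rpow_le_integral_distToOne_rpow hr.1 hr.2
      (e := e) (by linarith)
    rw [_root_.sub_sub_cancel] at hlower
    calc 2 ^ e * x ^ (m + e + 1) = x ^ m * (2 ^ e * x ^ (e + 1)) := by
          rw [add_assoc, rpow_add hx]; ring
      _ ≤ x ^ m * ∫ θ in (0)..(2 * π), distToOne (1 - x) θ ^ e := by gcongr
      _ ≤ K := by simpa using hK (mem_image_of_mem _ hr)
  · obtain ⟨C, hC⟩ := exists_forall_one_sub_rpow_mul_integral_distToOne_rpow_le hm he
    exact ⟨C, forall_mem_image.2 hC⟩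

lemma bddAbove_one_sub_rpow_mul_sSup_distToOne_rpow_iff {m e : ℝ} (hm : 0 ≤ m) :
    BddAbove ((fun r => (1 - r) ^ m * sSup ((fun θ => distToOne r θ ^ e) '' Icc 0 (2 * π)))
      '' Ico 0 1) ↔ -m ≤ e := by
  have h0 : (0 : ℝ) ∈ Icc 0 (2 * π) := ⟨le_rfl, by positivity⟩
  refine ⟨fun ⟨K, hK⟩ => ?_, fun he => ⟨max 1 (2 ^ e), ?_⟩⟩
  · suffices 0 ≤ m + e by linarith
    refine nonneg_of_forall_mul_rpow_le (K := K) one_pos fun x ⟨hx, hx1⟩ => ?_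
    have hr : 1 - x ∈ Ico (0 : ℝ) 1 := ⟨by linarith, by linarith⟩
    have hsup := le_csSup ((isCompact_Icc.image (continuous_distToOne_rpow hr.1 hr.2 e)).bddAbove)
      (mem_image_of_mem _ h0)
    rw [distToOne_zero hr.2.le, _root_.sub_sub_cancel] at hsup
    calc 1 * x ^ (m + e) = x ^ m * x ^ e := by rw [one_mul, rpow_add hx]
      _ ≤ x ^ m * sSup ((fun θ => distToOne (1 - x) θ ^ e) '' Icc 0 (2 * π)) := by gcongr
      _ ≤ K := by simpa using hK (mem_image_of_mem _ hr)
  · rintro _ ⟨r, ⟨hr, hr1⟩, rfl⟩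
    have ha : 0 < 1 - r := by linarith
    have hsup : sSup ((fun θ => distToOne r θ ^ e) '' Icc 0 (2 * π)) ≤ max ((1 - r) ^ e) (2 ^ e) :=
      csSup_le (h0 |> mem_image_of_mem _ |> nonempty_of_mem) <| forall_mem_image.2 fun θ _ =>
        rpow_le_max_rpow_of_mem_Icc ha
          ⟨one_sub_le_distToOne hr θ, distToOne_le_two hr hr1.le θ⟩ e
    calc (1 - r) ^ m * sSup ((fun θ => distToOne r θ ^ e) '' Icc 0 (2 * π))
        ≤ (1 - r) ^ m * max ((1 - r) ^ e) (2 ^ e) := by gcongr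
      _ = max ((1 - r) ^ (m + e)) ((1 - r) ^ m * 2 ^ e) := by
          rw [mul_max_of_nonneg _ _ (by positivity), rpow_add ha]
      _ ≤ max 1 (2 ^ e) := by
          have hwt : (1 - r) ^ m ≤ 1 := rpow_le_one ha.le (by linarith) hm
          gcongr
          · exact rpow_le_one ha.le (by linarith) (by linarith)
          · exact mul_le_of_le_one_left (by positivity) hwt

lemma norm_one_sub_cpow_neg (γ r θ : ℝ) :
    ‖(1 - (r : ℂ) * Complex.exp (θ * Complex.I)) ^ (-(γ : ℂ))‖ = distToOne r θ ^ (-γ) := by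
  rw [← Complex.ofReal_neg, Complex.norm_cpow_real, distToOne]

lemma intMean_top_one_sub_cpow (γ r : ℝ) :
    intMean ⊤ (fun z : ℂ => (1 - z) ^ (-(γ : ℂ))) r =
      sSup ((fun θ => distToOne r θ ^ (-γ)) '' Icc 0 (2 * π)) := by
  simp only [intMean, if_pos, norm_one_sub_cpow_neg]

lemma one_sub_rpow_mul_intMean_one_sub_cpow {p : ℝ≥0∞} (hp : 0 < p.toReal) (α γ : ℝ) {r : ℝ}
    (hr : r ≤ 1) :
    (1 - r) ^ α * intMean p (fun z : ℂ => (1 - z) ^ (-(γ : ℂ))) r =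
      (1 / (2 * π) * ((1 - r) ^ (α * p.toReal) *
        ∫ θ in (0)..(2 * π), distToOne r θ ^ (-γ * p.toReal))) ^ (1 / p.toReal) := by
  have hp_top : p ≠ ⊤ := by rintro rfl; simp at hp
  have ha : 0 ≤ 1 - r := sub_nonneg.2 hr
  simp only [intMean, if_neg hp_top, norm_one_sub_cpow_neg, ← rpow_mul (distToOne_nonneg _ _)]
  rw [mul_left_comm, mul_rpow (rpow_nonneg ha _)
      (mul_nonneg (by positivity) (integral_distToOne_rpow_nonneg r _)), ← rpow_mul ha,
    mul_one_div, mul_div_cancel_right₀ _ hp.ne']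

/-- Lemma A, case `q = ∞`: `(1-z)^{-γ} ∈ H(p,∞,α)` iff `γ ≤ α + 1/p`. -/
theorem powFun_mem_Hinf_iff (p : ℝ≥0∞) (α γ : ℝ) (hp : 0 < p) (hα : 0 < α) :
    MemH p ⊤ α (fun z : ℂ => (1 - z) ^ (-(γ : ℂ))) ↔ γ ≤ α + p⁻¹.toReal := by
  rw [MemH, if_pos rfl, and_iff_right (analyticOn_one_sub_cpow _)]
  rcases eq_or_ne p ⊤ with rfl | hp_top
  · simp only [intMean_top_one_sub_cpow, bddAbove_one_sub_rpow_mul_sSup_distToOne_rpow_iff hα.le,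
      inv_top, toReal_zero, add_zero, neg_le_neg_iff]
  · have ht : 0 < p.toReal := ENNReal.toReal_pos hp.ne' hp_top
    rw [image_congr fun r hr => one_sub_rpow_mul_intMean_one_sub_cpow ht α γ hr.2.le,
      bddAbove_image_const_mul_rpow_iff (by positivity) (by positivity) fun r hr =>
        mul_nonneg (rpow_nonneg (by linarith [hr.2]) _) (integral_distToOne_rpow_nonneg r _),
      bddAbove_one_sub_rpow_mul_integral_distToOne_rpow_iff (mul_pos hα ht), toReal_inv,
      show α + p.toReal⁻¹ = (α * p.toReal + 1) / p.toReal by field_simp, le_div_iff₀ ht]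
    constructor <;> intro h <;> linarith
end

section
/- Let 0 < p ≤ ∞, 0 < q < ∞, 0 < α < ∞, and let c ∈ ℝ. The function f(z) = (1-z)^{-(α+1/p)} (log(e/(1-z)))^{-c} belongs to H(p,q,α) if and only if c > 1/q. -/
open MeasureTheory Real Set Filter ENNReal

/-! On the disk, `‖f z‖` is comparable to `‖1 - z‖ ^ (-(α + 1/p)) * log (e / ‖1 - z‖) ^ (-c)`, and
on the circle of radius `r ≥ 1/2` the distance `‖1 - r e^{iθ}‖` lies between `(1 - r + |θ|) / π`
and `1 - r + |θ|`. For the upper bound on `M_p(r, f)`, the `p`-th power of the weight splits as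
`t ^ (-(1 + ε))`, which integrates over the circle to `O((1 - r) ^ (-ε))`, times a factor that is
almost decreasing in `t`. For the lower bound it suffices to integrate over the arc
`0 ≤ θ ≤ 1 - r`, where `‖1 - r e^{iθ}‖` is within a factor `2` of `1 - r`. Hence
`M_p(r, f) ≍ (1 - r) ^ (-α) * log (e / (1 - r)) ^ (-c)` for `1/2 ≤ r < 1`, so the integrand defining
`H(p, q, α)` is comparable to `(1 - r)⁻¹ * log (e / (1 - r)) ^ (-c q)`, which is integrable
near `1` iff `c q > 1`. -/

/-- `logEDiv x = log (e / x)`. -/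
noncomputable def logEDiv (x : ℝ) : ℝ := 1 - Real.log x

lemma one_sub_log_two_pos : 0 < 1 - Real.log 2 := by
  linarith [Real.log_two_lt_d9]

lemma one_sub_log_two_le_logEDiv {x : ℝ} (hx : 0 ≤ x) (hx2 : x ≤ 2) :
    1 - Real.log 2 ≤ logEDiv x := by
  rcases hx.eq_or_lt with rfl | hx
  · simp [logEDiv, (Real.log_pos one_lt_two).le]
  · unfold logEDiv; linarith [Real.log_le_log hx hx2]

lemma logEDiv_pos {x : ℝ} (hx : 0 ≤ x) (hx2 : x ≤ 2) : 0 < logEDiv x :=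
  one_sub_log_two_pos.trans_le (one_sub_log_two_le_logEDiv hx hx2)

lemma logEDiv_le_logEDiv {x y : ℝ} (hx : 0 < x) (hxy : x ≤ y) : logEDiv y ≤ logEDiv x := by
  unfold logEDiv; linarith [Real.log_le_log hx hxy]

lemma logEDiv_eq_add_log_div {x y : ℝ} (hx : 0 < x) (hy : 0 < y) :
    logEDiv x = logEDiv y + Real.log (y / x) := by
  rw [logEDiv, logEDiv, Real.log_div hy.ne' hx.ne']; ring

lemma logEDiv_le_mul_rpow_mul {a t δ : ℝ} (ha : 0 < a) (hat : a ≤ t) (ht : t ≤ 2) (hδ : 0 < δ) :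
    logEDiv a ≤ (1 + 1 / (δ * (1 - Real.log 2))) * (t / a) ^ δ * logEDiv t := by
  have hL0 := one_sub_log_two_pos
  have hLt := one_sub_log_two_le_logEDiv (ha.le.trans hat) ht
  have hs : 1 ≤ (t / a) ^ δ := Real.one_le_rpow ((one_le_div ha).2 hat) hδ.le
  have hlog : Real.log (t / a) ≤ (t / a) ^ δ / δ :=
    Real.log_le_rpow_div (div_pos (ha.trans_le hat) ha).le hδ
  have : (t / a) ^ δ / δ = (1 - Real.log 2) * (1 / (δ * (1 - Real.log 2)) * (t / a) ^ δ) := by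
    field_simp
  rw [logEDiv_eq_add_log_div ha (ha.trans_le hat)]
  have : 0 ≤ 1 / (δ * (1 - Real.log 2)) * (t / a) ^ δ :=
    mul_nonneg (one_div_pos.2 (mul_pos hδ hL0)).le (by positivity)
  nlinarith

lemma hasDerivAt_logEDiv_one_sub {r : ℝ} (hr : r < 1) :
    HasDerivAt (fun x => logEDiv (1 - x)) (1 - r)⁻¹ r := by
  simpa [logEDiv] using
    ((Real.hasDerivAt_log (sub_pos.2 hr).ne').comp r ((hasDerivAt_id r).const_sub 1)).const_sub 1

lemma rpow_le_rpow_abs_mul_rpow {x y K : ℝ} (hx : 0 < x) (hy : 0 < y) (hxy : x ≤ K * y)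
    (hyx : y ≤ K * x) (s : ℝ) : y ^ s ≤ K ^ |s| * x ^ s := by
  have hK : 0 < K := pos_of_mul_pos_left (hx.trans_le hxy) hy.le
  rw [show y ^ s = (y / x) ^ s * x ^ s by
    rw [Real.div_rpow hy.le hx.le, div_mul_cancel₀ _ (by positivity)]]
  gcongr
  rcases le_or_gt 0 s with hs | hs
  · rw [abs_of_nonneg hs]
    exact Real.rpow_le_rpow (by positivity) ((div_le_iff₀ hx).2 hyx) hs
  · rw [abs_of_neg hs, ← inv_div, Real.inv_rpow (by positivity), ← Real.rpow_neg (by positivity)]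
    exact Real.rpow_le_rpow (by positivity) ((div_le_iff₀ hy).2 hxy) (by linarith)

noncomputable def powLogWeight (s c t : ℝ) : ℝ := t ^ (-s) * logEDiv t ^ (-c)

section powLogWeight

variable {s c t : ℝ}

lemma powLogWeight_pos (ht : 0 < t) (ht2 : t ≤ 2) : 0 < powLogWeight s c t := by
  have := logEDiv_pos ht.le ht2
  unfold powLogWeight; positivity

lemma powLogWeight_rpow (ht : 0 < t) (ht2 : t ≤ 2) (p : ℝ) :
    powLogWeight s c t ^ p = powLogWeight (s * p) (c * p) t := by
  have := logEDiv_pos ht.le ht2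
  rw [powLogWeight, powLogWeight, Real.mul_rpow (by positivity) (by positivity),
    ← Real.rpow_mul ht.le, ← Real.rpow_mul this.le, neg_mul, neg_mul]

lemma rpow_mul_powLogWeight (ht : 0 < t) (e : ℝ) :
    t ^ e * powLogWeight s c t = powLogWeight (s - e) c t := by
  rw [powLogWeight, powLogWeight, ← mul_assoc, ← Real.rpow_add ht, neg_sub, sub_eq_neg_add,
    add_comm]

lemma continuousOn_powLogWeight : ContinuousOn (powLogWeight s c) (Ioc 0 2) := by
  intro t ht
  have hL := logEDiv_pos ht.1.le ht.2
  exact ((continuousAt_id.rpow_const (Or.inl ht.1.ne')).mul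
    ((continuousAt_const.sub (Real.continuousAt_log ht.1.ne')).rpow_const
      (Or.inl hL.ne'))).continuousWithinAt

lemma continuousOn_powLogWeight_one_sub :
    ContinuousOn (fun r => powLogWeight s c (1 - r)) (Ico (-1) 1) :=
  continuousOn_powLogWeight.comp (continuous_const.sub continuous_id).continuousOn
    fun r hr => ⟨by linarith [hr.2], by linarith [hr.1]⟩

lemma powLogWeight_le_mul_of_le_two_mul {a : ℝ} (ha : 0 < a) (hat : a ≤ t) (ht : t ≤ 2 * a)
    (ht1 : t ≤ 1) :
    powLogWeight s c a ≤ 2 ^ |s| * (1 + Real.log 2) ^ |c| * powLogWeight s c t := by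
  have ht0 := ha.trans_le hat
  have hLt : 1 ≤ logEDiv t := by unfold logEDiv; linarith [Real.log_nonpos ht0.le ht1]
  have hLa : logEDiv a ≤ (1 + Real.log 2) * logEDiv t := by
    have : Real.log (t / a) ≤ Real.log 2 :=
      Real.log_le_log (by positivity) ((div_le_iff₀ ha).2 (by linarith))
    rw [logEDiv_eq_add_log_div ha ht0]
    nlinarith [Real.log_pos one_lt_two]
  have hpow := rpow_le_rpow_abs_mul_rpow (K := 2) ht0 ha (by linarith) (by linarith) (-s)
  have hlog := rpow_le_rpow_abs_mul_rpow (by linarith) (logEDiv_pos ha.le (by linarith))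
    (by nlinarith [Real.log_pos one_lt_two, logEDiv_le_logEDiv ha hat]) hLa (-c)
  rw [abs_neg] at hpow hlog
  calc powLogWeight s c a ≤ (2 ^ |s| * t ^ (-s)) * ((1 + Real.log 2) ^ |c| * logEDiv t ^ (-c)) :=
        mul_le_mul hpow hlog (Real.rpow_nonneg (logEDiv_pos ha.le (by linarith)).le _)
          (by positivity)
    _ = _ := by unfold powLogWeight; ring

lemma powLogWeight_le_mul_rpow_mul_powLogWeight {u K ε : ℝ} (ht : 0 < t) (ht2 : t ≤ 2)
    (hu : 0 < u) (hK : 0 < K) (hut : u ≤ K * t) (hε : 0 ≤ ε) :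
    powLogWeight (1 + 2 * ε) c t ≤ K ^ (1 + ε) * u ^ (-(1 + ε)) * powLogWeight ε c t := by
  calc powLogWeight (1 + 2 * ε) c t = t ^ (-(1 + ε)) * powLogWeight ε c t := by
        rw [powLogWeight, powLogWeight, ← mul_assoc, ← Real.rpow_add ht]
        congr 2; ring
    _ ≤ (u / K) ^ (-(1 + ε)) * powLogWeight ε c t := by
        refine mul_le_mul_of_nonneg_right ?_ (powLogWeight_pos ht ht2).le
        exact Real.rpow_le_rpow_of_nonpos (div_pos hu hK) ((div_le_iff₀' hK).2 hut) (by linarith)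
    _ = _ := by
        rw [Real.div_rpow hu.le hK.le, Real.rpow_neg hK.le (1 + ε), div_inv_eq_mul,
          mul_comm (u ^ _)]

end powLogWeight

lemma exists_powLogWeight_le_mul {ε μ : ℝ} (hε : 0 < ε) (hμ : 0 ≤ μ) :
    ∃ C, 0 < C ∧ ∀ a t, 0 < a → a ≤ t → t ≤ 2 →
      powLogWeight ε μ t ≤ C * powLogWeight ε μ a := by
  set δ := ε / (μ + 1)
  set K := 1 + 1 / (δ * (1 - Real.log 2))
  have hδ : 0 < δ := by positivity
  have hK : 0 < K := add_pos one_pos (one_div_pos.2 (mul_pos hδ one_sub_log_two_pos))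
  refine ⟨K ^ μ, by positivity, fun a t ha hat ht => ?_⟩
  have ht0 := ha.trans_le hat
  set s := t / a
  have hs : 0 < s := by positivity
  have hLa := logEDiv_pos ha.le (hat.trans ht)
  have hLt := logEDiv_pos ht0.le ht
  have hlog : logEDiv t ^ (-μ) ≤ (K * s ^ δ) ^ μ * logEDiv a ^ (-μ) := by
    have hle : logEDiv a / (K * s ^ δ) ≤ logEDiv t := by
      rw [div_le_iff₀ (by positivity)]
      linarith [logEDiv_le_mul_rpow_mul ha hat ht hδ]
    calc logEDiv t ^ (-μ) ≤ (logEDiv a / (K * s ^ δ)) ^ (-μ) :=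
          Real.rpow_le_rpow_of_nonpos (by positivity) hle (by linarith)
      _ = (K * s ^ δ) ^ μ * logEDiv a ^ (-μ) := by
          rw [Real.div_rpow hLa.le (by positivity), Real.rpow_neg (x := K * s ^ δ) (by positivity),
            div_inv_eq_mul, mul_comm]
  have hpow : t ^ (-ε) = s ^ (-ε) * a ^ (-ε) := by
    rw [← Real.mul_rpow hs.le ha.le, div_mul_cancel₀ _ ha.ne']
  have hexp : s ^ (-ε) * (K * s ^ δ) ^ μ ≤ K ^ μ := by
    rw [Real.mul_rpow hK.le (by positivity), ← Real.rpow_mul hs.le, mul_left_comm,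
      ← Real.rpow_add hs]
    refine mul_le_of_le_one_right (by positivity) (Real.rpow_le_one_of_one_le_of_nonpos ?_ ?_)
    · exact (one_le_div ha).2 hat
    · have : δ * μ ≤ ε := by
        rw [div_mul_eq_mul_div, div_le_iff₀ (by positivity)]; nlinarith
      linarith
  calc powLogWeight ε μ t ≤ s ^ (-ε) * a ^ (-ε) * ((K * s ^ δ) ^ μ * logEDiv a ^ (-μ)) := by
        rw [powLogWeight, hpow]; gcongr
    _ = (s ^ (-ε) * (K * s ^ δ) ^ μ) * powLogWeight ε μ a := by rw [powLogWeight]; ring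
    _ ≤ K ^ μ * powLogWeight ε μ a := by
        gcongr
        exact (powLogWeight_pos ha (hat.trans ht)).le

lemma image_logEDiv_one_sub_Ioo :
    (fun r => logEDiv (1 - r)) '' Ioo (1 / 2) 1 = Ioi (1 + Real.log 2) := by
  have hhalf : Real.log (1 / 2) = -Real.log 2 := by rw [one_div, Real.log_inv]
  ext t
  constructor
  · rintro ⟨r, hr, rfl⟩
    have := Real.log_lt_log (sub_pos.2 hr.2) (show 1 - r < 1 / 2 by linarith [hr.1])
    simp only [mem_Ioi, logEDiv]
    linarith
  · intro ht
    have hexp : Real.exp (1 - t) < 1 / 2 := by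
      rw [← Real.exp_log (show (0 : ℝ) < 1 / 2 by norm_num), hhalf, Real.exp_lt_exp]
      linarith [mem_Ioi.1 ht]
    refine ⟨1 - Real.exp (1 - t), ⟨by linarith, by linarith [Real.exp_pos (1 - t)]⟩, ?_⟩
    simp [logEDiv]

/-- Substituting `u = log (e / (1 - r))` turns this into the integrability of `u ^ (-β)` at `∞`. -/
lemma integrableOn_powLogWeight_one_sub_iff {β : ℝ} :
    IntegrableOn (fun r => powLogWeight 1 β (1 - r)) (Ioo (1 / 2) 1) ↔ 1 < β := by
  have hderiv : ∀ r ∈ Ioo (1 / 2 : ℝ) 1,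
      HasDerivWithinAt (fun x => logEDiv (1 - x)) (1 - r)⁻¹ (Ioo (1 / 2) 1) r :=
    fun r hr => (hasDerivAt_logEDiv_one_sub hr.2).hasDerivWithinAt
  have hinj : InjOn (fun x => logEDiv (1 - x)) (Ioo (1 / 2) 1) := by
    intro r hr r' hr' h
    have := Real.log_injOn_pos (sub_pos.2 hr.2) (sub_pos.2 hr'.2) (by simpa [logEDiv] using h)
    linarith
  have hsubst := integrableOn_image_iff_integrableOn_abs_deriv_smul measurableSet_Ioo hderiv hinj
    (fun u => u ^ (-β))
  rw [image_logEDiv_one_sub_Ioo, integrableOn_Ioi_rpow_iff (by positivity)] at hsubst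
  rw [integrableOn_congr_fun (fun r hr => ?_) measurableSet_Ioo, ← hsubst]
  · constructor <;> intro h <;> linarith
  · rw [powLogWeight, smul_eq_mul, abs_inv, abs_of_pos (sub_pos.2 hr.2), Real.rpow_neg_one]

noncomputable def powLogFun (s c : ℝ) (z : ℂ) : ℂ :=
  (1 - z) ^ (-(s : ℂ)) * Complex.log (Complex.exp 1 / (1 - z)) ^ (-(c : ℂ))

section disk

variable {z : ℂ}

lemma re_one_sub_pos (hz : ‖z‖ < 1) : 0 < (1 - z).re := by
  rw [Complex.sub_re, Complex.one_re]
  linarith [Complex.re_le_norm z]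

lemma one_sub_ne_zero_of_norm_lt_one (hz : ‖z‖ < 1) : 1 - z ≠ 0 :=
  fun h => by simpa [h] using re_one_sub_pos hz

lemma norm_one_sub_pos (hz : ‖z‖ < 1) : 0 < ‖1 - z‖ :=
  norm_pos_iff.2 (one_sub_ne_zero_of_norm_lt_one hz)

lemma norm_one_sub_lt_two (hz : ‖z‖ < 1) : ‖1 - z‖ < 2 := by
  linarith [norm_sub_le (1 : ℂ) z, norm_one (α := ℂ)]

lemma re_exp_one_div_one_sub_pos (hz : ‖z‖ < 1) : 0 < (Complex.exp 1 / (1 - z)).re := by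
  rw [div_eq_mul_inv, ← Complex.ofReal_one, ← Complex.ofReal_exp, Complex.re_ofReal_mul,
    Complex.inv_re]
  exact mul_pos (Real.exp_pos 1)
    (div_pos (re_one_sub_pos hz) (Complex.normSq_pos.2 (one_sub_ne_zero_of_norm_lt_one hz)))

lemma re_log_exp_one_div_one_sub (hz : ‖z‖ < 1) :
    (Complex.log (Complex.exp 1 / (1 - z))).re = logEDiv ‖1 - z‖ := by
  rw [Complex.log_re, norm_div, Complex.norm_exp, Complex.one_re,
    Real.log_div (Real.exp_pos 1).ne' (norm_one_sub_pos hz).ne', Real.log_exp, logEDiv]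

lemma logEDiv_le_norm_log (hz : ‖z‖ < 1) :
    logEDiv ‖1 - z‖ ≤ ‖Complex.log (Complex.exp 1 / (1 - z))‖ :=
  re_log_exp_one_div_one_sub hz ▸ Complex.re_le_norm _

lemma exists_norm_log_le :
    ∃ K, 1 ≤ K ∧ ∀ z : ℂ, ‖z‖ < 1 →
      ‖Complex.log (Complex.exp 1 / (1 - z))‖ ≤ K * logEDiv ‖1 - z‖ := by
  have hL0 := one_sub_log_two_pos
  refine ⟨1 + π / (1 - Real.log 2), le_add_of_nonneg_right (div_nonneg Real.pi_pos.le hL0.le),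
    fun z hz => ?_⟩
  have hL := one_sub_log_two_le_logEDiv (norm_nonneg (1 - z)) (norm_one_sub_lt_two hz).le
  have him : |(Complex.log (Complex.exp 1 / (1 - z))).im| ≤ π := by
    rw [Complex.log_im]; exact Complex.abs_arg_le_pi _
  have hpi : π ≤ π / (1 - Real.log 2) * logEDiv ‖1 - z‖ := by
    rw [div_mul_eq_mul_div, le_div_iff₀ hL0]
    nlinarith [Real.pi_pos]
  calc ‖Complex.log (Complex.exp 1 / (1 - z))‖
      ≤ |(Complex.log (Complex.exp 1 / (1 - z))).re| +
          |(Complex.log (Complex.exp 1 / (1 - z))).im| := Complex.norm_le_abs_re_add_abs_im _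
    _ ≤ logEDiv ‖1 - z‖ + π := by
        rw [re_log_exp_one_div_one_sub hz, abs_of_pos (hL0.trans_le hL)]; linarith
    _ ≤ _ := by linarith

lemma norm_powLogFun (s c : ℝ) (z : ℂ) :
    ‖powLogFun s c z‖ = ‖1 - z‖ ^ (-s) * ‖Complex.log (Complex.exp 1 / (1 - z))‖ ^ (-c) := by
  rw [powLogFun, norm_mul, ← Complex.ofReal_neg, ← Complex.ofReal_neg, Complex.norm_cpow_real,
    Complex.norm_cpow_real]

lemma exists_norm_powLogFun_le_and_le (s c : ℝ) :
    ∃ C, 0 < C ∧ ∀ z : ℂ, ‖z‖ < 1 → ‖powLogFun s c z‖ ≤ C * powLogWeight s c ‖1 - z‖ ∧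
      powLogWeight s c ‖1 - z‖ ≤ C * ‖powLogFun s c z‖ := by
  obtain ⟨K, hK, hlog⟩ := exists_norm_log_le
  refine ⟨K ^ |c|, by positivity, fun z hz => ?_⟩
  have hL := logEDiv_pos (norm_nonneg (1 - z)) (norm_one_sub_lt_two hz).le
  have hle := logEDiv_le_norm_log hz
  have hN := hL.trans_le hle
  have hK' : ∀ x : ℝ, 0 ≤ x → x ≤ K * x := fun x hx => le_mul_of_one_le_left hx hK
  rw [norm_powLogFun, powLogWeight, mul_left_comm, mul_left_comm _ (‖1 - z‖ ^ (-s))]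
  constructor <;> gcongr
  · exact rpow_le_rpow_abs_mul_rpow hL hN (hle.trans (hK' _ hN.le)) (hlog z hz) (-c) |>.trans_eq
      (by rw [abs_neg])
  · exact rpow_le_rpow_abs_mul_rpow hN hL (hlog z hz) (hle.trans (hK' _ hN.le)) (-c) |>.trans_eq
      (by rw [abs_neg])

lemma differentiableOn_powLogFun (s c : ℝ) :
    DifferentiableOn ℂ (powLogFun s c) (Metric.ball 0 1) := by
  intro z hz
  have hz' : ‖z‖ < 1 := by simpa using hz
  have hsub : DifferentiableAt ℂ (fun z : ℂ => 1 - z) z := by fun_prop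
  have hlog : DifferentiableAt ℂ (fun z => Complex.log (Complex.exp 1 / (1 - z))) z :=
    ((differentiableAt_const _).div hsub (one_sub_ne_zero_of_norm_lt_one hz')).clog
      (Or.inl (re_exp_one_div_one_sub_pos hz'))
  refine (DifferentiableAt.mul ?_ ?_).differentiableWithinAt
  · exact hsub.cpow (differentiableAt_const _) (Or.inl (re_one_sub_pos hz'))
  · refine hlog.cpow (differentiableAt_const _) (Or.inl ?_)
    rw [re_log_exp_one_div_one_sub hz']
    exact logEDiv_pos (norm_nonneg _) (norm_one_sub_lt_two hz').le

end disk

section circle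

variable {r θ : ℝ}

lemma norm_ofReal_mul_exp_mul_I : ‖(r : ℂ) * Complex.exp (θ * Complex.I)‖ = |r| := by
  simp

lemma norm_circle_lt_one (hr : 0 ≤ r) (hr1 : r < 1) (θ : ℝ) :
    ‖(r : ℂ) * Complex.exp (θ * Complex.I)‖ < 1 := by
  rwa [norm_ofReal_mul_exp_mul_I, abs_of_nonneg hr]

lemma one_sub_le_norm_one_sub_mul_exp (hr : 0 ≤ r) :
    1 - r ≤ ‖1 - (r : ℂ) * Complex.exp (θ * Complex.I)‖ := by
  simpa [abs_of_nonneg hr] using norm_sub_norm_le (1 : ℂ) (r * Complex.exp (θ * Complex.I))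

lemma norm_one_sub_mul_exp_le (hr1 : r ≤ 1) :
    ‖1 - (r : ℂ) * Complex.exp (θ * Complex.I)‖ ≤ (1 - r) + |θ| := by
  have hsplit : 1 - (r : ℂ) * Complex.exp (θ * Complex.I) =
      ((1 - r : ℝ) : ℂ) * Complex.exp (θ * Complex.I) - (Complex.exp (Complex.I * θ) - 1) := by
    push_cast; ring_nf
  rw [hsplit]
  refine (norm_sub_le _ _).trans (add_le_add ?_ Real.norm_exp_I_mul_ofReal_sub_one_le)
  rw [norm_ofReal_mul_exp_mul_I, abs_of_nonneg (by linarith)]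

lemma norm_one_sub_mul_exp_sq :
    ‖1 - (r : ℂ) * Complex.exp (θ * Complex.I)‖ ^ 2 = (1 - r) ^ 2 + 2 * r * (1 - Real.cos θ) := by
  rw [Complex.sq_norm, Complex.normSq_apply, Complex.exp_mul_I]
  simp only [← Complex.ofReal_cos, ← Complex.ofReal_sin, Complex.sub_re, Complex.sub_im,
    Complex.mul_re, Complex.mul_im, Complex.add_re, Complex.add_im, Complex.ofReal_re,
    Complex.ofReal_im, Complex.I_re, Complex.I_im, Complex.one_re, Complex.one_im]
  linear_combination r ^ 2 * Real.sin_sq_add_cos_sq θ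

lemma one_sub_add_abs_le_pi_mul_norm (hr : 1 / 2 ≤ r) (hr1 : r ≤ 1) (hθ : |θ| ≤ π) :
    (1 - r) + |θ| ≤ π * ‖1 - (r : ℂ) * Complex.exp (θ * Complex.I)‖ := by
  have hpi : 2 ≤ π ^ 2 := by nlinarith [Real.pi_gt_three]
  have hcos : 2 * θ ^ 2 ≤ π ^ 2 * (2 * r * (1 - Real.cos θ)) := by
    have h := Real.cos_le_one_sub_mul_cos_sq hθ
    have : 2 / π ^ 2 * θ ^ 2 * π ^ 2 = 2 * θ ^ 2 := by field_simp
    calc 2 * θ ^ 2 ≤ 2 * r * (2 / π ^ 2 * θ ^ 2 * π ^ 2) := by rw [this]; nlinarith [sq_nonneg θ]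
      _ = π ^ 2 * (2 * r * (2 / π ^ 2 * θ ^ 2)) := by ring
      _ ≤ π ^ 2 * (2 * r * (1 - Real.cos θ)) := by gcongr; linarith
  have hsum : ((1 - r) + |θ|) ^ 2 ≤ 2 * (1 - r) ^ 2 + 2 * θ ^ 2 := by
    nlinarith [sq_abs θ, sq_nonneg ((1 - r) - |θ|)]
  rw [← pow_le_pow_iff_left₀ (by linarith [abs_nonneg θ]) (by positivity) two_ne_zero, mul_pow,
    norm_one_sub_mul_exp_sq]
  nlinarith [sq_nonneg (1 - r)]

lemma continuous_add_abs_rpow {a : ℝ} (ha : 0 < a) (s : ℝ) :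
    Continuous fun θ : ℝ => (a + |θ|) ^ s :=
  (continuous_const.add continuous_abs).rpow_const fun θ =>
    Or.inl (add_pos_of_pos_of_nonneg ha (abs_nonneg θ)).ne'

lemma integral_add_abs_rpow_le {a b ε : ℝ} (ha : 0 < a) (hb : 0 ≤ b) (hε : 0 < ε) :
    ∫ θ in (-b)..b, (a + |θ|) ^ (-(1 + ε)) ≤ 2 / ε * a ^ (-ε) := by
  set g : ℝ → ℝ := fun θ => (a + |θ|) ^ (-(1 + ε))
  have hg : Continuous g := continuous_add_abs_rpow ha _
  have heven : ∫ θ in (-b)..0, g θ = ∫ θ in (0 : ℝ)..b, g θ := by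
    simpa [g] using (intervalIntegral.integral_comp_neg (a := 0) (b := b) g).symm
  have hhalf : ∫ θ in (0 : ℝ)..b, g θ = (a ^ (-ε) - (a + b) ^ (-ε)) / ε := by
    rw [intervalIntegral.integral_congr (g := fun θ => (a + θ) ^ (-(1 + ε))) fun θ hθ => by
        simp only [g, abs_of_nonneg (uIcc_of_le hb ▸ hθ).1],
      intervalIntegral.integral_comp_add_left (fun x => x ^ (-(1 + ε))),
      integral_rpow (Or.inr ⟨by linarith, by
        rw [uIcc_of_le (by linarith)]; exact fun h => by linarith [h.1]⟩),
      show -(1 + ε) + 1 = -ε by ring, add_zero, div_neg, ← neg_div, neg_sub]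
  rw [← intervalIntegral.integral_add_adjacent_intervals (hg.intervalIntegrable _ 0)
    (hg.intervalIntegrable 0 _), heven, hhalf, ← add_div,
    show 2 / ε * a ^ (-ε) = 2 * a ^ (-ε) / ε by ring]
  have : 0 ≤ (a + b) ^ (-ε) := by positivity
  gcongr
  linarith

lemma continuous_powLogWeight_norm_one_sub_circle {s c r : ℝ} (hr : 0 ≤ r) (hr1 : r < 1) :
    Continuous fun θ : ℝ => powLogWeight s c ‖1 - (r : ℂ) * Complex.exp (θ * Complex.I)‖ := by
  refine continuousOn_powLogWeight.comp_continuous (by fun_prop) fun θ => ⟨?_, ?_⟩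
  · exact (sub_pos.2 hr1).trans_le (one_sub_le_norm_one_sub_mul_exp hr)
  · exact (norm_one_sub_lt_two (norm_circle_lt_one hr hr1 θ)).le

lemma exists_integral_powLogWeight_norm_one_sub_le {s μ : ℝ} (hs : 1 < s) (hμ : 0 ≤ μ) :
    ∃ C, 0 < C ∧ ∀ r : ℝ, 1 / 2 ≤ r → r < 1 →
      ∫ θ in (-π)..π, powLogWeight s μ ‖1 - (r : ℂ) * Complex.exp (θ * Complex.I)‖ ≤
        C * powLogWeight (s - 1) μ (1 - r) := by
  set ε := (s - 1) / 2
  have hε : 0 < ε := by simp only [ε]; linarith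
  obtain ⟨C₀, hC₀pos, hC₀⟩ := exists_powLogWeight_le_mul hε hμ
  refine ⟨C₀ * π ^ (1 + ε) * (2 / ε), by positivity, fun r hr hr1 => ?_⟩
  have ha : 0 < 1 - r := by linarith
  set t : ℝ → ℝ := fun θ => ‖1 - (r : ℂ) * Complex.exp (θ * Complex.I)‖
  have ht : ∀ θ, 1 - r ≤ t θ ∧ t θ ≤ 2 := fun θ =>
    ⟨one_sub_le_norm_one_sub_mul_exp (by linarith),
      (norm_one_sub_lt_two (norm_circle_lt_one (by linarith) hr1 θ)).le⟩
  have hpt : ∀ θ ∈ Icc (-π) π, powLogWeight s μ (t θ) ≤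
      C₀ * π ^ (1 + ε) * powLogWeight ε μ (1 - r) * (1 - r + |θ|) ^ (-(1 + ε)) := by
    intro θ hθ
    have hs' : s = 1 + 2 * ε := by simp only [ε]; ring
    calc powLogWeight s μ (t θ)
        ≤ π ^ (1 + ε) * (1 - r + |θ|) ^ (-(1 + ε)) * powLogWeight ε μ (t θ) :=
          hs' ▸ powLogWeight_le_mul_rpow_mul_powLogWeight (ha.trans_le (ht θ).1) (ht θ).2
            (by linarith [abs_nonneg θ]) Real.pi_pos
            (one_sub_add_abs_le_pi_mul_norm hr hr1.le (abs_le.2 hθ)) hε.le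
      _ ≤ π ^ (1 + ε) * (1 - r + |θ|) ^ (-(1 + ε)) * (C₀ * powLogWeight ε μ (1 - r)) := by
          gcongr; exact hC₀ _ _ ha (ht θ).1 (ht θ).2
      _ = _ := by ring
  have hweight : (1 - r) ^ (-ε) * powLogWeight ε μ (1 - r) = powLogWeight (s - 1) μ (1 - r) := by
    rw [rpow_mul_powLogWeight ha]; congr 1; simp only [ε]; ring
  calc ∫ θ in (-π)..π, powLogWeight s μ (t θ)
      ≤ ∫ θ in (-π)..π,
          C₀ * π ^ (1 + ε) * powLogWeight ε μ (1 - r) * (1 - r + |θ|) ^ (-(1 + ε)) :=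
        intervalIntegral.integral_mono_on (by linarith [Real.pi_pos])
          ((continuous_powLogWeight_norm_one_sub_circle (by linarith) hr1).intervalIntegrable _ _)
          (((continuous_add_abs_rpow ha _).intervalIntegrable _ _).const_mul _) hpt
    _ = C₀ * π ^ (1 + ε) * powLogWeight ε μ (1 - r) *
          ∫ θ in (-π)..π, (1 - r + |θ|) ^ (-(1 + ε)) :=
        intervalIntegral.integral_const_mul _ _
    _ ≤ C₀ * π ^ (1 + ε) * powLogWeight ε μ (1 - r) * (2 / ε * (1 - r) ^ (-ε)) := by
        refine mul_le_mul_of_nonneg_left (integral_add_abs_rpow_le ha Real.pi_pos.le hε) ?_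
        have := powLogWeight_pos (s := ε) (c := μ) ha (by linarith)
        positivity
    _ = _ := by rw [← hweight]; ring

lemma intMean_nonneg (p : ℝ≥0∞) (f : ℂ → ℂ) (r : ℝ) : 0 ≤ intMean p f r := by
  unfold intMean
  split_ifs
  · exact Real.sSup_nonneg (by rintro _ ⟨θ, -, rfl⟩; positivity)
  · refine Real.rpow_nonneg (mul_nonneg (by positivity) ?_) _
    exact intervalIntegral.integral_nonneg (by positivity) fun θ _ => by positivity

section intMean

variable {f : ℂ → ℂ}

lemma integral_comp_circle_eq (g : ℂ → ℝ) (r : ℝ) :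
    ∫ θ in (0 : ℝ)..2 * π, g (r * Complex.exp (θ * Complex.I)) =
      ∫ θ in (-π)..π, g (r * Complex.exp (θ * Complex.I)) := by
  have hper : Function.Periodic (fun θ : ℝ => g (r * Complex.exp (θ * Complex.I))) (2 * π) :=
    fun θ => by simpa using congrArg (fun w => g (r * w)) (Complex.exp_mul_I_periodic θ)
  simpa [show -π + 2 * π = π by ring] using hper.intervalIntegral_add_eq 0 (-π)

lemma continuous_comp_circle (hf : ContinuousOn f (Metric.ball 0 1)) {r : ℝ} (hr : |r| < 1) :
    Continuous fun θ : ℝ => f (r * Complex.exp (θ * Complex.I)) :=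
  hf.comp_continuous (by fun_prop) fun θ => by simpa using hr

lemma continuousOn_intMean (p : ℝ≥0∞) (hf : ContinuousOn f (Metric.ball 0 1)) :
    ContinuousOn (intMean p f) (Ico 0 1) := by
  intro x hx
  set s := (x + 1) / 2
  have hs : 0 ≤ s := by simp only [s]; linarith [hx.1]
  set F : ℝ → ℝ → ℝ := fun ρ θ => ‖f ((projIcc 0 s hs ρ : ℝ) * Complex.exp (θ * Complex.I))‖
  have hF : Continuous (Function.uncurry F) := by
    refine continuous_norm.comp (hf.comp_continuous (by fun_prop) fun q => ?_)
    have := (projIcc 0 s hs q.1).2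
    simp only [Metric.mem_ball, dist_zero_right, norm_ofReal_mul_exp_mul_I]
    rw [abs_of_nonneg this.1]
    exact this.2.trans_lt (by simp only [s]; linarith [hx.2])
  have hG : Continuous fun ρ => intMean p f (projIcc 0 s hs ρ) := by
    unfold intMean
    split_ifs
    · exact isCompact_Icc.continuous_sSup hF
    · refine (continuous_const.mul ?_).rpow_const fun _ => Or.inr (by positivity)
      exact intervalIntegral.continuous_parametric_intervalIntegral_of_continuous'
        (hF.rpow_const fun _ => Or.inr ENNReal.toReal_nonneg) _ _
  have hIcc : ContinuousOn (intMean p f) (Icc 0 s) :=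
    hG.continuousOn.congr fun ρ hρ => by simp only [projIcc_of_mem _ hρ]
  refine (hIcc x ⟨hx.1, by simp only [s]; linarith [hx.2]⟩).mono_of_mem_nhdsWithin ?_
  exact mem_nhdsWithin.2 ⟨Iio s, isOpen_Iio, by simp only [s, mem_Iio]; linarith [hx.2],
    fun y hy => ⟨hy.2.1, hy.1.le⟩⟩

lemma continuousOn_one_sub_rpow_mul_intMean_rpow (p : ℝ≥0∞)
    (hf : ContinuousOn f (Metric.ball 0 1)) (e : ℝ) {q : ℝ} (hq : 0 ≤ q) :
    ContinuousOn (fun r => (1 - r) ^ e * intMean p f r ^ q) (Ico 0 1) :=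
  ((continuous_const.sub continuous_id).continuousOn.rpow_const fun _ hr =>
    Or.inl (sub_pos.2 hr.2).ne').mul
    ((continuousOn_intMean p hf).rpow_const fun _ _ => Or.inr hq)

end intMean

section intMean_bounds

variable {f : ℂ → ℂ} {p : ℝ≥0∞} {α c C : ℝ}

lemma exists_intMean_top_le (hα : 0 < α) (hc : 0 ≤ c) (hC : 0 ≤ C)
    (hfC : ∀ z : ℂ, ‖z‖ < 1 → ‖f z‖ ≤ C * powLogWeight α c ‖1 - z‖) :
    ∃ C', 0 ≤ C' ∧ ∀ r : ℝ, 1 / 2 ≤ r → r < 1 →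
      intMean ⊤ f r ≤ C' * powLogWeight α c (1 - r) := by
  obtain ⟨C₀, hC₀pos, hC₀⟩ := exists_powLogWeight_le_mul hα hc
  refine ⟨C * C₀, by positivity, fun r hr hr1 => ?_⟩
  rw [intMean, if_pos rfl]
  refine csSup_le ((nonempty_Icc.2 (by positivity)).image _) ?_
  rintro _ ⟨θ, -, rfl⟩
  have hz := norm_circle_lt_one (by linarith) hr1 θ
  calc ‖f (r * Complex.exp (θ * Complex.I))‖
      ≤ C * powLogWeight α c ‖1 - (r : ℂ) * Complex.exp (θ * Complex.I)‖ := hfC _ hz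
    _ ≤ C * (C₀ * powLogWeight α c (1 - r)) := by
        gcongr
        exact hC₀ _ _ (by linarith) (one_sub_le_norm_one_sub_mul_exp (by linarith))
          (norm_one_sub_lt_two hz).le
    _ = C * C₀ * powLogWeight α c (1 - r) := by ring

lemma powLogWeight_le_intMean_top (hf : ContinuousOn f (Metric.ball 0 1))
    (hfC : ∀ z : ℂ, ‖z‖ < 1 → powLogWeight α c ‖1 - z‖ ≤ C * ‖f z‖) (hC : 0 ≤ C) {r : ℝ}
    (hr : 0 ≤ r) (hr1 : r < 1) : powLogWeight α c (1 - r) ≤ C * intMean ⊤ f r := by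
  have hz : ‖(r : ℂ)‖ < 1 := by rwa [Complex.norm_real, Real.norm_of_nonneg hr]
  have hr' : ‖1 - (r : ℂ)‖ = 1 - r := by
    rw [← Complex.ofReal_one, ← Complex.ofReal_sub, Complex.norm_real,
      Real.norm_of_nonneg (by linarith)]
  have hbdd := ((isCompact_Icc (a := 0) (b := 2 * π)).image
    (continuous_comp_circle hf (r := r) (by rwa [abs_of_nonneg hr])).norm).bddAbove
  rw [intMean, if_pos rfl]
  calc powLogWeight α c (1 - r) ≤ C * ‖f r‖ := by simpa [hr'] using hfC r hz
    _ ≤ C * _ := by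
        gcongr
        exact le_csSup hbdd ⟨0, ⟨le_rfl, by positivity⟩, by simp⟩

lemma intMean_le_of_integral_le (hp : p ≠ 0) (hp' : p ≠ ⊤) {r K W : ℝ} (hK : 0 ≤ K)
    (hW : 0 ≤ W)
    (h : ∫ θ in (0 : ℝ)..2 * π, ‖f (r * Complex.exp (θ * Complex.I))‖ ^ p.toReal ≤
      K * W ^ p.toReal) :
    intMean p f r ≤ (K / (2 * π)) ^ p.toReal⁻¹ * W := by
  have hpt : 0 < p.toReal := ENNReal.toReal_pos hp hp'
  rw [intMean, if_neg hp', one_div p.toReal]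
  calc ((1 / (2 * π)) * ∫ θ in (0 : ℝ)..2 * π,
        ‖f (r * Complex.exp (θ * Complex.I))‖ ^ p.toReal) ^ p.toReal⁻¹
      ≤ ((1 / (2 * π)) * (K * W ^ p.toReal)) ^ p.toReal⁻¹ := by
        gcongr
        exact mul_nonneg (by positivity)
          (intervalIntegral.integral_nonneg (by positivity) fun θ _ => by positivity)
    _ = (K / (2 * π)) ^ p.toReal⁻¹ * W := by
        rw [show 1 / (2 * π) * (K * W ^ p.toReal) = K / (2 * π) * W ^ p.toReal by ring,
          Real.mul_rpow (by positivity) (by positivity), Real.rpow_rpow_inv hW hpt.ne']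

lemma le_intMean_of_le_integral (hp : p ≠ 0) (hp' : p ≠ ⊤) {r K W : ℝ} (hK : 0 ≤ K)
    (hW : 0 ≤ W)
    (h : W ^ p.toReal ≤
      K * ∫ θ in (0 : ℝ)..2 * π, ‖f (r * Complex.exp (θ * Complex.I))‖ ^ p.toReal) :
    W ≤ (2 * π * K) ^ p.toReal⁻¹ * intMean p f r := by
  have hpt : 0 < p.toReal := ENNReal.toReal_pos hp hp'
  have hI0 : 0 ≤ ∫ θ in (0 : ℝ)..2 * π, ‖f (r * Complex.exp (θ * Complex.I))‖ ^ p.toReal :=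
    intervalIntegral.integral_nonneg (by positivity) fun θ _ => by positivity
  rw [intMean, if_neg hp', one_div p.toReal, ← Real.mul_rpow (by positivity) (by positivity)]
  calc W = (W ^ p.toReal) ^ p.toReal⁻¹ := (Real.rpow_rpow_inv hW hpt.ne').symm
    _ ≤ _ := by
        gcongr
        calc W ^ p.toReal ≤ K * _ := h
          _ = _ := by rw [mul_mul_mul_comm, mul_one_div_cancel (by positivity), one_mul]

lemma exists_integral_norm_rpow_le {pt s : ℝ} (hpt : 0 < pt) (hs : 1 < s * pt) (hc : 0 ≤ c)
    (hC : 0 ≤ C) (hf : ContinuousOn f (Metric.ball 0 1))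
    (hfC : ∀ z : ℂ, ‖z‖ < 1 → ‖f z‖ ≤ C * powLogWeight s c ‖1 - z‖) :
    ∃ K, 0 ≤ K ∧ ∀ r : ℝ, 1 / 2 ≤ r → r < 1 →
      ∫ θ in (0 : ℝ)..2 * π, ‖f (r * Complex.exp (θ * Complex.I))‖ ^ pt ≤
        K * powLogWeight (s * pt - 1) (c * pt) (1 - r) := by
  obtain ⟨C₁, hC₁, hC₁le⟩ :=
    exists_integral_powLogWeight_norm_one_sub_le (μ := c * pt) hs (by positivity)
  refine ⟨C ^ pt * C₁, by positivity, fun r hr hr1 => ?_⟩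
  rw [integral_comp_circle_eq (fun z => ‖f z‖ ^ pt)]
  calc ∫ θ in (-π)..π, ‖f (r * Complex.exp (θ * Complex.I))‖ ^ pt
      ≤ ∫ θ in (-π)..π, C ^ pt *
          powLogWeight (s * pt) (c * pt) ‖1 - (r : ℂ) * Complex.exp (θ * Complex.I)‖ := by
        refine intervalIntegral.integral_mono_on (by linarith [Real.pi_pos])
          (((continuous_comp_circle hf (by rwa [abs_of_nonneg (by linarith)])).norm.rpow_const
            fun _ => Or.inr hpt.le).intervalIntegrable _ _)
          (((continuous_powLogWeight_norm_one_sub_circle (by linarith) hr1).const_mul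
            _).intervalIntegrable _ _) fun θ _ => ?_
        have hz := norm_circle_lt_one (by linarith) hr1 θ
        have hw := powLogWeight_pos (s := s) (c := c) (norm_one_sub_pos hz)
          (norm_one_sub_lt_two hz).le
        rw [← powLogWeight_rpow (norm_one_sub_pos hz) (norm_one_sub_lt_two hz).le,
          ← Real.mul_rpow hC hw.le]
        exact Real.rpow_le_rpow (norm_nonneg _) (hfC _ hz) hpt.le
    _ = C ^ pt * ∫ θ in (-π)..π,
          powLogWeight (s * pt) (c * pt) ‖1 - (r : ℂ) * Complex.exp (θ * Complex.I)‖ :=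
        intervalIntegral.integral_const_mul _ _
    _ ≤ C ^ pt * (C₁ * powLogWeight (s * pt - 1) (c * pt) (1 - r)) := by
        gcongr; exact hC₁le r hr hr1
    _ = _ := by ring

lemma exists_powLogWeight_le_integral_norm_rpow {pt s : ℝ} (hpt : 0 < pt) (hC : 0 ≤ C)
    (hf : ContinuousOn f (Metric.ball 0 1))
    (hfC : ∀ z : ℂ, ‖z‖ < 1 → powLogWeight s c ‖1 - z‖ ≤ C * ‖f z‖) :
    ∃ K, 0 ≤ K ∧ ∀ r : ℝ, 1 / 2 ≤ r → r < 1 → powLogWeight (s * pt - 1) (c * pt) (1 - r) ≤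
      K * ∫ θ in (0 : ℝ)..2 * π, ‖f (r * Complex.exp (θ * Complex.I))‖ ^ pt := by
  set D := 2 ^ |s| * (1 + Real.log 2) ^ |c|
  refine ⟨(D * C) ^ pt, by positivity, fun r hr hr1 => ?_⟩
  have ha : 0 < 1 - r := by linarith
  have hr0 : 0 ≤ r := by linarith
  have hint : Continuous fun θ : ℝ => ‖f (r * Complex.exp (θ * Complex.I))‖ ^ pt :=
    (continuous_comp_circle hf (by rwa [abs_of_nonneg hr0])).norm.rpow_const
      fun _ => Or.inr hpt.le
  have harc : ∀ θ ∈ Icc 0 (1 - r), powLogWeight s c (1 - r) ^ pt ≤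
      (D * C) ^ pt * ‖f (r * Complex.exp (θ * Complex.I))‖ ^ pt := by
    intro θ hθ
    have hz := norm_circle_lt_one hr0 hr1 θ
    have hnear := norm_one_sub_mul_exp_le (θ := θ) hr1.le
    rw [abs_of_nonneg hθ.1] at hnear
    have hw := powLogWeight_le_mul_of_le_two_mul (s := s) (c := c) ha
      (one_sub_le_norm_one_sub_mul_exp hr0) (by linarith [hθ.2]) (by linarith [hθ.2])
    rw [← Real.mul_rpow (by positivity) (norm_nonneg _)]
    refine Real.rpow_le_rpow (powLogWeight_pos ha (by linarith)).le (hw.trans ?_) hpt.le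
    exact (mul_le_mul_of_nonneg_left (hfC _ hz) (by positivity)).trans_eq (mul_assoc _ _ _).symm
  have hshift := rpow_mul_powLogWeight (s := s * pt) (c := c * pt) ha 1
  rw [Real.rpow_one] at hshift
  rw [← hshift, ← powLogWeight_rpow ha (by linarith)]
  calc (1 - r) * powLogWeight s c (1 - r) ^ pt
      = ∫ θ in (0 : ℝ)..1 - r, powLogWeight s c (1 - r) ^ pt := by simp
    _ ≤ ∫ θ in (0 : ℝ)..1 - r, (D * C) ^ pt * ‖f (r * Complex.exp (θ * Complex.I))‖ ^ pt :=
        intervalIntegral.integral_mono_on ha.le intervalIntegrable_const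
          ((hint.intervalIntegrable _ _).const_mul _) harc
    _ = (D * C) ^ pt * ∫ θ in (0 : ℝ)..1 - r, ‖f (r * Complex.exp (θ * Complex.I))‖ ^ pt :=
        intervalIntegral.integral_const_mul _ _
    _ ≤ _ := by
        gcongr
        refine intervalIntegral.integral_mono_interval le_rfl ha.le
          (by linarith [Real.pi_gt_three]) ?_ (hint.intervalIntegrable _ _)
        exact Filter.Eventually.of_forall fun θ => by positivity

lemma exists_intMean_le (hp : p ≠ 0) (hα : 0 < α) (hc : 0 ≤ c) (hC : 0 ≤ C)
    (hf : ContinuousOn f (Metric.ball 0 1))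
    (hfC : ∀ z : ℂ, ‖z‖ < 1 → ‖f z‖ ≤ C * powLogWeight (α + p⁻¹.toReal) c ‖1 - z‖) :
    ∃ C', 0 ≤ C' ∧ ∀ r : ℝ, 1 / 2 ≤ r → r < 1 →
      intMean p f r ≤ C' * powLogWeight α c (1 - r) := by
  rcases eq_or_ne p ⊤ with rfl | hp'
  · exact exists_intMean_top_le hα hc hC (by simpa using hfC)
  have hpt : 0 < p.toReal := ENNReal.toReal_pos hp hp'
  have hspt : (α + p⁻¹.toReal) * p.toReal - 1 = α * p.toReal := by
    rw [add_mul, ENNReal.toReal_inv, inv_mul_cancel₀ hpt.ne']; ring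
  obtain ⟨K, hK, hI⟩ := exists_integral_norm_rpow_le hpt (by nlinarith) hc hC hf hfC
  refine ⟨(K / (2 * π)) ^ p.toReal⁻¹, by positivity, fun r hr hr1 => ?_⟩
  have ha : 0 < 1 - r := by linarith
  refine intMean_le_of_integral_le hp hp' hK (powLogWeight_pos ha (by linarith)).le ?_
  rw [powLogWeight_rpow ha (by linarith), ← hspt]
  exact hI r hr hr1

lemma exists_powLogWeight_le_intMean (hp : p ≠ 0) (hC : 0 ≤ C)
    (hf : ContinuousOn f (Metric.ball 0 1))
    (hfC : ∀ z : ℂ, ‖z‖ < 1 → powLogWeight (α + p⁻¹.toReal) c ‖1 - z‖ ≤ C * ‖f z‖) :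
    ∃ C', 0 ≤ C' ∧ ∀ r : ℝ, 1 / 2 ≤ r → r < 1 →
      powLogWeight α c (1 - r) ≤ C' * intMean p f r := by
  rcases eq_or_ne p ⊤ with rfl | hp'
  · exact ⟨C, hC, fun r hr hr1 =>
      powLogWeight_le_intMean_top hf (by simpa using hfC) hC (by linarith) hr1⟩
  have hpt : 0 < p.toReal := ENNReal.toReal_pos hp hp'
  have hspt : (α + p⁻¹.toReal) * p.toReal - 1 = α * p.toReal := by
    rw [add_mul, ENNReal.toReal_inv, inv_mul_cancel₀ hpt.ne']; ring
  obtain ⟨K, hK, hI⟩ := exists_powLogWeight_le_integral_norm_rpow hpt hC hf hfC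
  refine ⟨(2 * π * K) ^ p.toReal⁻¹, by positivity, fun r hr hr1 => ?_⟩
  have ha : 0 < 1 - r := by linarith
  refine le_intMean_of_le_integral hp hp' hK (powLogWeight_pos ha (by linarith)).le ?_
  rw [powLogWeight_rpow ha (by linarith), ← hspt]
  exact hI r hr hr1

end intMean_bounds

lemma intervalIntegrable_zero_one_iff_integrableOn_Ioo {g : ℝ → ℝ}
    (hg : ContinuousOn g (Ico 0 1)) :
    IntervalIntegrable g volume 0 1 ↔ IntegrableOn g (Ioo (1 / 2) 1) := by
  have hhalf : IntegrableOn g (Ioc 0 (1 / 2)) :=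
    ((hg.mono (Icc_subset_Ico_right (by norm_num))).integrableOn_Icc).mono_set Ioc_subset_Icc_self
  rw [intervalIntegrable_iff_integrableOn_Ioo_of_le zero_le_one,
    ← Ioc_union_Ioo_eq_Ioo (b := 1 / 2) (by norm_num) (by norm_num), integrableOn_union,
    and_iff_right hhalf]

lemma integrableOn_of_le_mul {g h : ℝ → ℝ} {s : Set ℝ} {K : ℝ} (hs : MeasurableSet s)
    (hg : ContinuousOn g s) (hh : IntegrableOn h s) (hg0 : ∀ x ∈ s, 0 ≤ g x)
    (hgh : ∀ x ∈ s, g x ≤ K * h x) : IntegrableOn g s :=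
  (hh.const_mul K).mono' (hg.aestronglyMeasurable hs) <| (ae_restrict_iff' hs).2 <|
    Eventually.of_forall fun x hx => by rw [Real.norm_of_nonneg (hg0 x hx)]; exact hgh x hx

section integrand

variable {t α c q C : ℝ} {M : ℝ → ℝ}

lemma rpow_mul_powLogWeight_rpow (ht : 0 < t) (ht2 : t ≤ 2) :
    t ^ (α * q - 1) * powLogWeight α c t ^ q = powLogWeight 1 (c * q) t := by
  rw [powLogWeight_rpow ht ht2, powLogWeight, powLogWeight, ← mul_assoc, ← Real.rpow_add ht]
  congr 2; ring

lemma integrableOn_powLogWeight_one_sub_of_le (hq : 0 ≤ q) (hC : 0 ≤ C) (hM : ∀ r, 0 ≤ M r)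
    (hle : ∀ r : ℝ, 1 / 2 ≤ r → r < 1 → powLogWeight α c (1 - r) ≤ C * M r)
    (hint : IntegrableOn (fun r => (1 - r) ^ (α * q - 1) * M r ^ q) (Ioo (1 / 2) 1)) :
    IntegrableOn (fun r => powLogWeight 1 (c * q) (1 - r)) (Ioo (1 / 2) 1) := by
  refine integrableOn_of_le_mul (K := C ^ q) measurableSet_Ioo
    (continuousOn_powLogWeight_one_sub.mono fun r hr => ⟨by linarith [hr.1], hr.2⟩) hint
    (fun r hr => (powLogWeight_pos (by linarith [hr.2]) (by linarith [hr.1])).le) fun r hr => ?_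
  have ha : 0 < 1 - r := by linarith [hr.2]
  have ha2 : 1 - r ≤ 2 := by linarith [hr.1]
  rw [← rpow_mul_powLogWeight_rpow ha ha2, mul_left_comm, ← Real.mul_rpow hC (hM r)]
  gcongr
  · exact (powLogWeight_pos ha ha2).le
  · exact hle r hr.1.le hr.2

lemma integrableOn_of_le_powLogWeight (hq : 0 ≤ q) (hC : 0 ≤ C) (hM : ∀ r, 0 ≤ M r)
    (hcont : ContinuousOn (fun r => (1 - r) ^ (α * q - 1) * M r ^ q) (Ioo (1 / 2) 1))
    (hle : ∀ r : ℝ, 1 / 2 ≤ r → r < 1 → M r ≤ C * powLogWeight α c (1 - r))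
    (hint : IntegrableOn (fun r => powLogWeight 1 (c * q) (1 - r)) (Ioo (1 / 2) 1)) :
    IntegrableOn (fun r => (1 - r) ^ (α * q - 1) * M r ^ q) (Ioo (1 / 2) 1) := by
  refine integrableOn_of_le_mul (K := C ^ q) measurableSet_Ioo hcont hint
    (fun r hr => mul_nonneg (Real.rpow_nonneg (by linarith [hr.2]) _) (by have := hM r; positivity))
    fun r hr => ?_
  have ha : 0 < 1 - r := by linarith [hr.2]
  have ha2 : 1 - r ≤ 2 := by linarith [hr.1]
  rw [← rpow_mul_powLogWeight_rpow ha ha2, mul_left_comm, ← Real.mul_rpow hC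
    (powLogWeight_pos ha ha2).le]
  gcongr
  · exact hM r
  · exact hle r hr.1.le hr.2

end integrand

/-- Lemma B: `(1-z)^{-(α+1/p)} (log(e/(1-z)))^{-c} ∈ H(p,q,α)` iff `c > 1/q`. -/
theorem powLogFun_mem_H_iff (p q : ℝ≥0∞) (α c : ℝ)
    (hp : 0 < p) (hq : 0 < q) (hq' : q ≠ ⊤) (hα : 0 < α) :
    MemH p q α (fun z : ℂ =>
        (1 - z) ^ (-((α + p⁻¹.toReal : ℝ) : ℂ)) *
          Complex.log (Complex.exp 1 / (1 - z)) ^ (-(c : ℂ))) ↔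
      1 / q.toReal < c := by
  have hqt : 0 < q.toReal := ENNReal.toReal_pos hq.ne' hq'
  set f := powLogFun (α + p⁻¹.toReal) c
  change MemH p q α f ↔ _
  have hfd := differentiableOn_powLogFun (α + p⁻¹.toReal) c
  have hg := continuousOn_one_sub_rpow_mul_intMean_rpow p hfd.continuousOn
    (α * q.toReal - 1) hqt.le
  rw [MemH, if_neg hq', and_iff_right (hfd.analyticOn Metric.isOpen_ball),
    intervalIntegrable_zero_one_iff_integrableOn_Ioo hg, one_div q.toReal,
    inv_lt_iff_one_lt_mul₀ hqt,
    ← integrableOn_powLogWeight_one_sub_iff]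
  obtain ⟨K, hK, hfK⟩ := exists_norm_powLogFun_le_and_le (α + p⁻¹.toReal) c
  constructor
  · intro hint
    obtain ⟨C, hC, hlow⟩ := exists_powLogWeight_le_intMean hp.ne' hK.le hfd.continuousOn
      fun z hz => (hfK z hz).2
    exact integrableOn_powLogWeight_one_sub_of_le hqt.le hC (intMean_nonneg p f) hlow hint
  · intro hint
    have hc : 0 < c :=
      pos_of_mul_pos_left (one_pos.trans (integrableOn_powLogWeight_one_sub_iff.1 hint)) hqt.le
    obtain ⟨C, hC, hup⟩ := exists_intMean_le hp.ne' hα hc.le hK.le hfd.continuousOn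
      fun z hz => (hfK z hz).1
    exact integrableOn_of_le_powLogWeight hqt.le hC (intMean_nonneg p f)
      (hg.mono fun r hr => ⟨by linarith [hr.1], hr.2⟩) hup hint
end circle
end
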